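/- Let d ≥ 1, κ ∈ (0,1], L > 0, α > 0, C₀ > 0 and 0 < ρ̲ ≤ ρ̄. Let f₁, f₂ : ℝ^d → ℝ be (κ, L)-Hölder on the cube [0,1]^d, and let μ be a probability measure on [0,1]^d having a density p with respect to Lebesgue measure with ρ̲ ≤ p(x) ≤ ρ̄ for all x ∈ [0,1]^d. Assume the margin condition: μ{x ∈ [0,1]^d : 0 < |f₁(x) − f₂(x)| ≤ δ} ≤ C₀·δ^α for every δ ∈ (0,1]. If α·κ > 1, then either f₁(x) ≥ f₂(x) for every x ∈ [0,1]^d, or f₁(x) ≤ f₂(x) for every x ∈ [0,1]^d. -/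

import Mathlib

/-!
Suppose `g = f₁ - f₂` takes both signs on the cube. By continuity `g < 0` on a ball around
some `x₀` and `g > a > 0` on a ball around some `x₁`. For each small offset `v` transversal to
`x₁ - x₀`, the segment from `x₀ + v` to `x₁ + v` crosses a level `η ≍ r ^ κ`, and by Hölder
continuity it stays in the band `0 < g ≤ 2 η` for a parameter length at least `r`. Integrating
over the offsets (Fubini, after a linear change of variables sending a coordinate vector to
`x₁ - x₀`) shows that `{0 < g ≤ K r ^ κ}` has Lebesgue measure at least `c r`. As the density
is bounded below, the margin condition at `δ = K r ^ κ` then gives `c r ≲ r ^ (α κ)`, which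
fails as `r → 0` because `α κ > 1`.
-/

open MeasureTheory Set Filter Topology Metric
open scoped NNReal ENNReal

theorem HolderOnWith.of_abs_sub_le {E : Type*} [SeminormedAddCommGroup E] {f : E → ℝ}
    {s : Set E} {L κ : ℝ} (hκ : 0 ≤ κ) (h : ∀ x ∈ s, ∀ y ∈ s, |f x - f y| ≤ L * ‖x - y‖ ^ κ) :
    HolderOnWith L.toNNReal κ.toNNReal f s := fun x hx y hy => by
  rw [edist_dist, edist_dist, Real.coe_toNNReal _ hκ,
    ENNReal.ofReal_rpow_of_nonneg dist_nonneg hκ, ← ENNReal.ofReal.eq_def,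
    ← ENNReal.ofReal_mul' (by positivity), dist_eq_norm, dist_eq_norm, Real.norm_eq_abs]
  exact ENNReal.ofReal_le_ofReal (h x hx y hy)

theorem HolderOnWith.sub {X Y : Type*} [PseudoEMetricSpace X] [SeminormedAddCommGroup Y]
    {C C' r : ℝ≥0} {f g : X → Y} {s : Set X} (hf : HolderOnWith C r f s)
    (hg : HolderOnWith C' r g s) : HolderOnWith (C + C') r (f - g) s := fun x hx y hy =>
  calc edist ((f - g) x) ((f - g) y) = edist (f x + -g x) (f y + -g y) := by
        simp only [Pi.sub_apply, sub_eq_add_neg]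
    _ ≤ edist (f x) (f y) + edist (g x) (g y) := by
        rw [← edist_neg_neg (g x)]; exact edist_add_add_le _ _ _ _
    _ ≤ C * edist x y ^ (r : ℝ) + C' * edist x y ^ (r : ℝ) :=
        add_le_add (hf x hx y hy) (hg x hx y hy)
    _ = _ := by push_cast; ring

theorem holderOnWith_one_add_smul {E : Type*} [NormedAddCommGroup E] [NormedSpace ℝ E]
    (a u : E) (s : Set ℝ) : HolderOnWith ‖u‖₊ 1 (fun t : ℝ => a + t • u) s := by
  refine holderOnWith_one.2 (LipschitzWith.lipschitzOnWith ?_)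
  refine LipschitzWith.of_dist_le_mul fun t t' => ?_
  rw [dist_add_left, dist_eq_norm, ← sub_smul, norm_smul, Real.dist_eq, Real.norm_eq_abs,
    coe_nnnorm, mul_comm]

theorem HolderOnWith.ofReal_le_volume_abs_sub_le {h : ℝ → ℝ} {C κ : ℝ≥0}
    (hh : HolderOnWith C κ h (Icc 0 1)) (hκ : 0 < κ) {y : ℝ} (h0 : h 0 ≤ y) (h1 : y ≤ h 1)
    {r : ℝ} (hr0 : 0 ≤ r) (hr1 : r ≤ 1) :
    ENNReal.ofReal r ≤ volume {t ∈ Icc (0 : ℝ) 1 | |h t - y| ≤ C * r ^ (κ : ℝ)} := by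
  obtain ⟨t₀, ht₀, rfl⟩ := intermediate_value_Icc zero_le_one (hh.continuousOn hκ) ⟨h0, h1⟩
  set a := min t₀ (1 - r)
  have ha : t₀ - r ≤ a := le_min (by linarith) (by linarith [ht₀.2])
  calc ENNReal.ofReal r = volume (Icc a (a + r)) := by simp [Real.volume_Icc]
    _ ≤ _ := measure_mono fun t ht => by
      have ht₁ : t ∈ Icc (0 : ℝ) 1 :=
        ⟨(le_min ht₀.1 (by linarith)).trans ht.1, by linarith [ht.2, min_le_right t₀ (1 - r)]⟩
      refine ⟨ht₁, ?_⟩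
      rw [← Real.dist_eq]
      refine hh.dist_le_of_le ht₁ ht₀ ?_
      rw [Real.dist_eq, abs_le]
      constructor <;> linarith [ht.1, ht.2, min_le_left t₀ (1 - r)]

theorem HolderOnWith.ofReal_le_volume_segment_mem_Ioc {E : Type*} [NormedAddCommGroup E]
    [NormedSpace ℝ E] {Q : Set E} (hQ : Convex ℝ Q) {g : E → ℝ} {C κ : ℝ≥0}
    (hg : HolderOnWith C κ g Q) (hκ : 0 < κ) {a b : E} (ha : a ∈ Q) (hb : b ∈ Q) {r η : ℝ}
    (hr0 : 0 ≤ r) (hr1 : r ≤ 1) (hη : C * ‖b - a‖ ^ (κ : ℝ) * r ^ (κ : ℝ) < η)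
    (hga : g a ≤ η) (hgb : η ≤ g b) :
    ENNReal.ofReal r ≤
      volume {t : ℝ | a + t • (b - a) ∈ Q ∧ g (a + t • (b - a)) ∈ Ioc 0 (2 * η)} := by
  have hseg : MapsTo (fun t : ℝ => a + t • (b - a)) (Icc 0 1) Q :=
    fun t ht => hQ.add_smul_sub_mem ha hb ht
  have hh := hg.comp (holderOnWith_one_add_smul a (b - a) (Icc 0 1)) hseg
  simp only [mul_one] at hh
  refine (hh.ofReal_le_volume_abs_sub_le hκ (y := η) (by simpa) (by simpa) hr0 hr1).trans
    (measure_mono fun t ⟨ht, hlev⟩ => ⟨hseg ht, ?_⟩)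
  simp only [Function.comp_apply, NNReal.coe_mul, coe_nnnorm, NNReal.coe_rpow] at hlev
  rw [abs_le] at hlev
  constructor <;> linarith [hlev.1, hlev.2]

theorem exists_ball_subset_inter_preimage {E Y : Type*} [NormedAddCommGroup E]
    [NormedSpace ℝ E] [TopologicalSpace Y] {Q : Set E} (hQ : Convex ℝ Q)
    (hQi : (interior Q).Nonempty) {g : E → Y} (hg : ContinuousOn g Q) {U : Set Y}
    (hU : IsOpen U) {z : E} (hz : z ∈ Q) (hgz : g z ∈ U) :
    ∃ x, ∃ ε > 0, ball x ε ⊆ Q ∩ g ⁻¹' U := by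
  have hz' : z ∈ closure (interior Q) := by
    rw [hQ.closure_interior_eq_closure_of_nonempty_interior hQi]; exact subset_closure hz
  have := mem_closure_iff_nhdsWithin_neBot.1 hz'
  obtain ⟨x, hx⟩ := (eventually_mem_nhdsWithin.and
    (((hg z hz).mono interior_subset).eventually_mem (hU.mem_nhds hgz))).exists
  obtain ⟨ε, hε, hball⟩ := Metric.isOpen_iff.1
    ((hg.mono interior_subset).isOpen_inter_preimage isOpen_interior hU) x hx
  exact ⟨x, ε, hε, hball.trans (inter_subset_inter_left _ interior_subset)⟩

theorem exists_balls_subset_neg_pos {E : Type*} [NormedAddCommGroup E] [NormedSpace ℝ E]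
    {Q : Set E} (hQ : Convex ℝ Q) (hQi : (interior Q).Nonempty) {g : E → ℝ}
    (hg : ContinuousOn g Q) {z₀ z₁ : E} (hz₀ : z₀ ∈ Q) (hz₁ : z₁ ∈ Q) (hneg : g z₀ < 0)
    (hpos : 0 < g z₁) :
    ∃ x₀ x₁ : E, ∃ ε > 0, ∃ a > 0,
      ball x₀ ε ⊆ Q ∩ g ⁻¹' Iio 0 ∧ ball x₁ ε ⊆ Q ∩ g ⁻¹' Ioi a := by
  obtain ⟨x₀, ε₀, hε₀, hball₀⟩ :=
    exists_ball_subset_inter_preimage hQ hQi hg isOpen_Iio hz₀ hneg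
  obtain ⟨x₁, ε₁, hε₁, hball₁⟩ :=
    exists_ball_subset_inter_preimage hQ hQi hg isOpen_Ioi hz₁ (half_lt_self hpos)
  exact ⟨x₀, x₁, min ε₀ ε₁, lt_min hε₀ hε₁, g z₁ / 2, half_pos hpos,
    (ball_subset_ball (min_le_left _ _)).trans hball₀,
    (ball_subset_ball (min_le_right _ _)).trans hball₁⟩

theorem le_volume_of_forall_le_volume_insertNth {n : ℕ} (i : Fin (n + 1))
    {Z : Set (Fin (n + 1) → ℝ)} (hZ : MeasurableSet Z) {B : Set (Fin n → ℝ)}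
    (hB : MeasurableSet B) {m : ℝ≥0∞}
    (h : ∀ s ∈ B, m ≤ volume {t : ℝ | i.insertNth t s ∈ Z}) :
    m * volume B ≤ volume Z := by
  have he := (volume_preserving_piFinSuccAbove (fun _ : Fin (n + 1) => ℝ) i).symm
  rw [← he.measure_preimage hZ.nullMeasurableSet, Measure.volume_eq_prod,
    Measure.prod_apply_symm (he.measurable hZ)]
  calc m * volume B = ∫⁻ _ in B, m := (setLIntegral_const B m).symm
    _ ≤ ∫⁻ s in B, volume {t : ℝ | i.insertNth t s ∈ Z} := setLIntegral_mono' hB h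
    _ ≤ _ := setLIntegral_le_lintegral _ _

theorem transvection_insertNth {n : ℕ} (i : Fin (n + 1)) (u : Fin (n + 1) → ℝ) (t : ℝ)
    (s : Fin n → ℝ) :
    LinearMap.transvection (LinearMap.proj i) (u - Pi.single i 1) (i.insertNth t s) =
      i.insertNth 0 s + t • u := by
  ext j
  rcases eq_or_ne j i with rfl | hj
  · simp [LinearMap.transvection.apply]
    ring
  · obtain ⟨j, rfl⟩ := Fin.exists_succAbove_eq hj
    simp [LinearMap.transvection.apply, hj]

theorem le_volume_of_forall_le_volume_line {n : ℕ} (i : Fin (n + 1)) (x₀ u : Fin (n + 1) → ℝ)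
    {S : Set (Fin (n + 1) → ℝ)} {B : Set (Fin n → ℝ)} (hB : MeasurableSet B) {m : ℝ≥0∞}
    (h : ∀ s ∈ B, m ≤ volume {t : ℝ | x₀ + i.insertNth 0 s + t • u ∈ S}) :
    ENNReal.ofReal |u i| * (m * volume B) ≤ volume S := by
  set A := LinearMap.transvection (LinearMap.proj i) (u - Pi.single i 1)
  set T := toMeasurable volume S
  set Z := (fun y => x₀ + A y) ⁻¹' T
  have hZ : MeasurableSet Z :=
    (measurableSet_toMeasurable _ _).preimage
      (continuous_const.add A.continuous_of_finiteDimensional).measurable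
  have hslice : ∀ s ∈ B, m ≤ volume {t : ℝ | i.insertNth t s ∈ Z} := fun s hs =>
    (h s hs).trans <| measure_mono fun t ht => by
      change x₀ + A (i.insertNth t s) ∈ T
      rw [transvection_insertNth, ← add_assoc]
      exact subset_toMeasurable _ _ ht
  have hdet : LinearMap.det A = u i := by simp [A]
  calc ENNReal.ofReal |u i| * (m * volume B)
      ≤ ENNReal.ofReal |LinearMap.det A| * volume Z := by
        rw [hdet]; gcongr; exact le_volume_of_forall_le_volume_insertNth i hZ hB hslice
    _ = volume ((x₀ + ·) '' (A '' Z)) := by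
        rw [image_add_left, measure_preimage_add, Measure.addHaar_image_linearMap]
    _ ≤ volume T := measure_mono <| by
        rintro _ ⟨_, ⟨y, hy, rfl⟩, rfl⟩; exact hy
    _ = volume S := measure_toMeasurable S

theorem norm_insertNth_zero_le {n : ℕ} (i : Fin (n + 1)) (s : Fin n → ℝ) :
    ‖(i.insertNth 0 s : Fin (n + 1) → ℝ)‖ ≤ ‖s‖ := by
  refine (pi_norm_le_iff_of_nonneg (norm_nonneg s)).2 fun j => ?_
  rcases eq_or_ne j i with rfl | hj
  · simp
  · obtain ⟨j, rfl⟩ := Fin.exists_succAbove_eq hj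
    simpa using norm_le_pi_norm s j

theorem eventually_mul_rpow_le {K κ b : ℝ} (hκ : 0 < κ) (hb : 0 < b) :
    ∀ᶠ r in 𝓝[>] (0 : ℝ), K * r ^ κ ≤ b := by
  have : Tendsto (fun r : ℝ => K * r ^ κ) (𝓝 0) (𝓝 0) := by
    simpa using (tendsto_id.rpow_const_nhds_zero hκ).const_mul K
  exact (this.eventually (eventually_le_nhds hb)).filter_mono nhdsWithin_le_nhds

theorem not_eventually_mul_le_mul_rpow {c K p : ℝ} (hc : 0 < c) (hp : 1 < p) :
    ¬ ∀ᶠ r in 𝓝[>] (0 : ℝ), c * r ≤ K * r ^ p := by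
  intro h
  have hsmall := eventually_mul_rpow_le (K := K) (sub_pos.2 hp) (half_pos hc)
  obtain ⟨r, hr, hsmall, hr0 : 0 < r⟩ := (h.and (hsmall.and self_mem_nhdsWithin)).exists
  rw [← sub_add_cancel p 1, Real.rpow_add_one hr0.ne'] at hr
  nlinarith

theorem HolderOnWith.exists_eventually_ofReal_mul_le_volume_setOf_mem_Ioc {n : ℕ}
    {Q : Set (Fin (n + 1) → ℝ)} (hQ : Convex ℝ Q) (hQi : (interior Q).Nonempty)
    {g : (Fin (n + 1) → ℝ) → ℝ} {C κ : ℝ≥0} (hg : HolderOnWith C κ g Q) (hκ : 0 < κ)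
    {z₀ z₁ : Fin (n + 1) → ℝ} (hz₀ : z₀ ∈ Q) (hz₁ : z₁ ∈ Q) (hneg : g z₀ < 0)
    (hpos : 0 < g z₁) :
    ∃ c > 0, ∃ K > 0, ∀ᶠ r in 𝓝[>] (0 : ℝ),
      ENNReal.ofReal (c * r) ≤ volume {x ∈ Q | g x ∈ Ioc 0 (K * r ^ (κ : ℝ))} := by
  obtain ⟨x₀, x₁, ε, hε, a, ha, hball₀, hball₁⟩ :=
    exists_balls_subset_neg_pos hQ hQi (hg.continuousOn hκ) hz₀ hz₁ hneg hpos
  obtain ⟨i, hi⟩ : ∃ i, (x₁ - x₀) i ≠ 0 := by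
    refine Function.ne_iff.1 fun h => ?_
    have h₀ : g x₀ < 0 := (hball₀ (mem_ball_self hε)).2
    have h₁ : a < g x₁ := (hball₁ (mem_ball_self hε)).2
    rw [sub_eq_zero.1 h] at h₁
    linarith
  -- the `+ 1` keeps the Hölder tolerance `C ‖x₁ - x₀‖ ^ κ * r ^ κ` strictly below `D * r ^ κ`
  set D : ℝ := C * ‖x₁ - x₀‖ ^ (κ : ℝ) + 1
  refine ⟨|(x₁ - x₀) i| * (2 * ε) ^ n, by positivity, 2 * D, by positivity, ?_⟩
  filter_upwards [(eventually_le_nhds one_pos).filter_mono nhdsWithin_le_nhds,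
    eventually_mul_rpow_le (K := D) (NNReal.coe_pos.2 hκ) ha, self_mem_nhdsWithin]
    with r hr1 hra (hr0 : 0 < r)
  have hslice : ∀ s ∈ ball (0 : Fin n → ℝ) ε, ENNReal.ofReal r ≤ volume {t : ℝ |
      x₀ + i.insertNth 0 s + t • (x₁ - x₀) ∈ {x ∈ Q | g x ∈ Ioc 0 (2 * D * r ^ (κ : ℝ))}} := by
    intro s hs
    have hv : ‖(i.insertNth 0 s : Fin (n + 1) → ℝ)‖ < ε :=
      (norm_insertNth_zero_le i s).trans_lt (mem_ball_zero_iff.1 hs)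
    obtain ⟨hQ₀, hg₀ : g _ < 0⟩ := hball₀ (a := x₀ + i.insertNth 0 s) (by simpa using hv)
    obtain ⟨hQ₁, hg₁ : a < g _⟩ := hball₁ (a := x₁ + i.insertNth 0 s) (by simpa using hv)
    have hrκ : 0 < r ^ (κ : ℝ) := Real.rpow_pos_of_pos hr0 _
    have hCr : 0 ≤ C * ‖x₁ - x₀‖ ^ (κ : ℝ) * r ^ (κ : ℝ) := by positivity
    have hDr : D * r ^ (κ : ℝ) = C * ‖x₁ - x₀‖ ^ (κ : ℝ) * r ^ (κ : ℝ) + r ^ (κ : ℝ) := by ring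
    have hseg := hg.ofReal_le_volume_segment_mem_Ioc hQ hκ hQ₀ hQ₁ hr0.le hr1
      (η := D * r ^ (κ : ℝ)) (by rw [add_sub_add_right_eq_sub]; linarith) (by linarith)
      (by linarith)
    rw [add_sub_add_right_eq_sub, ← mul_assoc] at hseg
    exact hseg
  calc ENNReal.ofReal (|(x₁ - x₀) i| * (2 * ε) ^ n * r)
      = ENNReal.ofReal |(x₁ - x₀) i| * (ENNReal.ofReal r * volume (ball (0 : Fin n → ℝ) ε)) := by
        rw [Real.volume_pi_ball _ hε, Fintype.card_fin,
          ← ENNReal.ofReal_mul hr0.le, ← ENNReal.ofReal_mul (abs_nonneg _)]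
        ring_nf
    _ ≤ _ := le_volume_of_forall_le_volume_line i x₀ (x₁ - x₀) measurableSet_ball hslice

theorem mul_measure_inter_le_withDensity_restrict {α : Type*} [MeasurableSpace α]
    {μ : Measure α} [SFinite μ] {s : Set α} (hs : MeasurableSet s) {f : α → ℝ≥0∞} {c : ℝ≥0∞}
    (hf : ∀ x ∈ s, c ≤ f x) (t : Set α) :
    c * μ (t ∩ s) ≤ (μ.restrict s).withDensity f t := by
  rw [withDensity_apply', ← Measure.restrict_apply' hs, ← setLIntegral_const]
  exact lintegral_mono_ae (ae_restrict_of_ae ((ae_restrict_mem hs).mono hf))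

theorem margin_smoothness_one_action_optimal
    (d : ℕ) (hd : 1 ≤ d) (κ L α C₀ ρlo ρhi : ℝ)
    (hκ0 : 0 < κ) (hC₀ : 0 < C₀)
    (hρlo : 0 < ρlo)
    (f₁ f₂ : (Fin d → ℝ) → ℝ)
    (hf₁ : ∀ x ∈ Set.Icc (0 : Fin d → ℝ) 1, ∀ y ∈ Set.Icc (0 : Fin d → ℝ) 1,
      |f₁ x - f₁ y| ≤ L * ‖x - y‖ ^ κ)
    (hf₂ : ∀ x ∈ Set.Icc (0 : Fin d → ℝ) 1, ∀ y ∈ Set.Icc (0 : Fin d → ℝ) 1,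
      |f₂ x - f₂ y| ≤ L * ‖x - y‖ ^ κ)
    (p : (Fin d → ℝ) → ℝ)
    (hp : ∀ x ∈ Set.Icc (0 : Fin d → ℝ) 1, ρlo ≤ p x ∧ p x ≤ ρhi)
    (μ : Measure (Fin d → ℝ))
    (hdens : μ = (volume.restrict (Set.Icc (0 : Fin d → ℝ) 1)).withDensity
      (fun x => ENNReal.ofReal (p x)))
    (hmargin : ∀ δ ∈ Set.Ioc (0 : ℝ) 1,
      μ {x ∈ Set.Icc (0 : Fin d → ℝ) 1 | 0 < |f₁ x - f₂ x| ∧ |f₁ x - f₂ x| ≤ δ}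
        ≤ ENNReal.ofReal (C₀ * δ ^ α))
    (hακ : 1 < α * κ) :
    (∀ x ∈ Set.Icc (0 : Fin d → ℝ) 1, f₂ x ≤ f₁ x) ∨
    (∀ x ∈ Set.Icc (0 : Fin d → ℝ) 1, f₁ x ≤ f₂ x) := by
  obtain ⟨n, rfl⟩ : ∃ n, d = n + 1 := ⟨d - 1, by omega⟩
  by_contra! h
  obtain ⟨⟨z₀, hz₀, h₀⟩, z₁, hz₁, h₁⟩ := h
  have hQi : (interior (Icc (0 : Fin (n + 1) → ℝ) 1)).Nonempty :=
    ⟨fun _ => 1 / 2, mem_interior_iff_mem_nhds.2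
      (pi_Icc_mem_nhds (fun _ => by norm_num) fun _ => by norm_num)⟩
  have hg := (HolderOnWith.of_abs_sub_le hκ0.le hf₁).sub (HolderOnWith.of_abs_sub_le hκ0.le hf₂)
  obtain ⟨c, hc, K, hK, hvol⟩ := hg.exists_eventually_ofReal_mul_le_volume_setOf_mem_Ioc
    (convex_Icc 0 1) hQi (Real.toNNReal_pos.2 hκ0) hz₀ hz₁ (sub_neg.2 h₀) (sub_pos.2 h₁)
  rw [Real.coe_toNNReal _ hκ0.le] at hvol
  refine not_eventually_mul_le_mul_rpow (mul_pos hρlo hc) (mul_comm α κ ▸ hακ)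
    (K := C₀ * K ^ α) ?_
  filter_upwards [hvol, eventually_mul_rpow_le hκ0 one_pos, self_mem_nhdsWithin]
    with r hr hr1 (hr0 : 0 < r)
  set S := {x ∈ Icc (0 : Fin (n + 1) → ℝ) 1 | (f₁ - f₂) x ∈ Ioc 0 (K * r ^ κ)}
  have hmass : ENNReal.ofReal (ρlo * c * r) ≤ ENNReal.ofReal (C₀ * (K * r ^ κ) ^ α) :=
    calc ENNReal.ofReal (ρlo * c * r) = ENNReal.ofReal ρlo * ENNReal.ofReal (c * r) := by
          rw [mul_assoc, ENNReal.ofReal_mul hρlo.le]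
      _ ≤ ENNReal.ofReal ρlo * volume (S ∩ Icc 0 1) := by
          rw [inter_eq_left.2 (sep_subset _ _)]; gcongr
      _ ≤ μ S := hdens ▸ mul_measure_inter_le_withDensity_restrict measurableSet_Icc
          (fun x hx => ENNReal.ofReal_le_ofReal (hp x hx).1) S
      _ ≤ μ {x ∈ Icc 0 1 | 0 < |f₁ x - f₂ x| ∧ |f₁ x - f₂ x| ≤ K * r ^ κ} :=
          measure_mono fun x ⟨hxQ, hpos, hle⟩ =>
            ⟨hxQ, abs_pos_of_pos hpos, (abs_of_pos hpos).trans_le hle⟩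
      _ ≤ _ := hmargin _ ⟨by positivity, hr1⟩
  rw [ENNReal.ofReal_le_ofReal_iff (by positivity), Real.mul_rpow hK.le (by positivity),
    ← Real.rpow_mul hr0.le] at hmass
  linarith
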